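/- arXiv:2008.00255 — 7 statements merged into one kernel-verified Lean document; each statement's English description precedes it below -/
import Mathlib

section
/- Let Σ be a finite alphabet and θ an antimorphic involution on Σ*. If u is a θ-conjugate of w (i.e., uv = θ(v)w for some v ∈ Σ*), then either there exist x, y ∈ Σ* such that u = xy and w = yθ(x), or w = θ(u). -/
variable {α : Type*}

/-- θ is an antimorphic involution on Σ* : θ(uv) = θ(v)θ(u) and θ² = id. -/
def IsAntimorphicInvolution (θ : List α → List α) : Prop :=
  (∀ u v : List α, θ (u ++ v) = θ v ++ θ u) ∧ ∀ u : List α, θ (θ u) = u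

/-- The set of θ-conjugates of w: C_θ(w) = { θ(v) ++ u : w = u ++ v }. -/
def thetaConjugates (θ : List α → List α) (w : List α) : Set (List α) :=
  {x | ∃ u v : List α, w = u ++ v ∧ x = θ v ++ u}

/-- n-fold concatenation power of a word. -/
def listPow (z : List α) (n : ℕ) : List α := (List.replicate n z).flatten

/-- A word is primitive if it is not a proper power. -/
def Primitive (z : List α) : Prop :=
  z ≠ [] ∧ ∀ (t : List α) (k : ℕ), z = listPow t k → k = 1

/-- The conjugacy class of w: { v ++ u : w = u ++ v }. -/
def conjClass (w : List α) : Set (List α) := {x | ∃ u v : List α, w = u ++ v ∧ x = v ++ u}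

lemma theta_nil (θ : List α → List α) (hθ : IsAntimorphicInvolution θ) : θ [] = [] := by
  have h1 : θ [] = θ [] ++ θ [] := by simpa using hθ.1 [] []
  have h2 := congrArg List.length h1
  simp only [List.length_append] at h2
  exact List.eq_nil_of_length_eq_zero (by omega)

lemma theta_ne_nil (θ : List α → List α) (hθ : IsAntimorphicInvolution θ) (s : List α)
    (hs : s ≠ []) : θ s ≠ [] := by
  intro h
  apply hs
  have := hθ.2 s
  rw [h, theta_nil θ hθ] at this
  exact this.symm

lemma theta_length_ge (θ : List α → List α) (hθ : IsAntimorphicInvolution θ) :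
    ∀ s : List α, s.length ≤ (θ s).length := by
  intro s
  induction s with
  | nil => simp
  | cons a t ih =>
    have h1 : θ (a :: t) = θ t ++ θ [a] := by
      have := hθ.1 [a] t
      simpa using this
    have h2 : θ [a] ≠ [] := theta_ne_nil θ hθ [a] (by simp)
    have h3 : 1 ≤ (θ [a]).length := List.length_pos_iff.mpr h2
    rw [h1]
    simp only [List.length_append, List.length_cons]
    omega

lemma theta_length (θ : List α → List α) (hθ : IsAntimorphicInvolution θ) (s : List α) :
    (θ s).length = s.length := by
  have h1 := theta_length_ge θ hθ s
  have h2 := theta_length_ge θ hθ (θ s)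
  rw [hθ.2 s] at h2
  omega

theorem stmt0 (θ : List α → List α) (hθ : IsAntimorphicInvolution θ)
    (u w v : List α) (h : u ++ v = θ v ++ w) :
    (∃ x y : List α, u = x ++ y ∧ w = y ++ θ x) ∨ w = θ u := by
  have hlen : u.length = w.length := by
    have := congrArg List.length h
    simp only [List.length_append, theta_length θ hθ] at this
    omega
  have hpu : u <+: u ++ v := List.prefix_append u v
  have hpt : θ v <+: u ++ v := h ▸ List.prefix_append (θ v) w
  by_cases hc : v.length ≤ u.length
  · -- θ v is a prefix of u
    have hle : (θ v).length ≤ u.length := by rw [theta_length θ hθ]; exact hc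
    obtain ⟨y, hy⟩ := List.prefix_of_prefix_length_le hpt hpu hle
    left
    refine ⟨θ v, y, hy.symm, ?_⟩
    have : θ v ++ (y ++ v) = θ v ++ w := by
      rw [← List.append_assoc, hy, h]
    have hw : y ++ v = w := List.append_cancel_left this
    rw [← hw, hθ.2 v]
  · -- u is a prefix of θ v
    have hle : u.length ≤ (θ v).length := by rw [theta_length θ hθ]; omega
    obtain ⟨z, hz⟩ := List.prefix_of_prefix_length_le hpu hpt hle
    -- θ v = u ++ z, so v = z ++ w and θ(θ v) = θ z ++ θ u = v
    have hv : v = z ++ w := by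
      have : u ++ v = u ++ (z ++ w) := by rw [← List.append_assoc, hz, h]
      exact List.append_cancel_left this
    have hv2 : v = θ z ++ θ u := by
      have := hθ.2 v
      rw [← hz, hθ.1 u z] at this
      exact this.symm
    have heq : z ++ w = θ z ++ θ u := hv ▸ hv2
    have hlw : w.length = (θ u).length := by rw [theta_length θ hθ]; omega
    right
    exact (List.append_inj' heq hlw).2
end

section
/- There exists an alphabet Σ, an antimorphic involution θ on Σ*, and words u, w over Σ such that u is a θ-conjugate of w but w is not a θ-conjugate of u; hence θ-conjugacy is not a symmetric relation. -/
variable {α : Type*}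

theorem stmt3 : ∃ (σ : Type) (θ : List σ → List σ), IsAntimorphicInvolution θ ∧
    ∃ u w : List σ, (∃ v, u ++ v = θ v ++ w) ∧ ¬ (∃ v, w ++ v = θ v ++ u) := by
  refine ⟨Bool, fun v => v.reverse.map not, ⟨?_, ?_⟩,
    [false, false, false], [false, true, true], ⟨[true, true], by decide⟩, ?_⟩
  · intro u v; simp
  · intro u; simp [Function.comp_def]
  · rintro ⟨v, h⟩
    rcases v.eq_nil_or_concat with rfl | ⟨l, x, rfl⟩
    · simp at h
    · -- last letter of LHS is x; last of RHS is false. Head of RHS is not x.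
      have h2 := congrArg List.reverse h
      have h3 := congrArg List.head? h
      simp at h2 h3
      obtain ⟨hx, -⟩ := h2
      subst hx
      simp at h3
end

section
/- Let z ∈ Σ* and θ an antimorphic involution. If |C_θ(z)| ≠ 1, then |C_θ(z^i)| < |C_θ(z^{i+1})| for all i ≥ 1. -/
variable {α : Type*}

/-!
Appending `z` to `w` turns each θ-conjugate `θ v ++ u` of `w` into the θ-conjugate
`θ (v ++ z) ++ u = θ z ++ (θ v ++ u)` of `w ++ z`, so `|C_θ(z^i)| ≤ |C_θ(z^(i+1))|`.
If equality held, every θ-conjugate of `z^(i+1)` would begin with `θ z`. For a factorisation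
`z = u ++ v`, the θ-conjugate `θ v ++ z^i ++ u` of `z^(i+1)` begins with `θ v ++ u`, a word of
the same length as `θ z`; hence every θ-conjugate of `z` equals `θ z`, i.e. `|C_θ(z)| = 1`.
-/

theorem listPow_succ (z : List α) (n : ℕ) : listPow z (n + 1) = z ++ listPow z n := by
  simp [listPow, List.replicate_succ]

theorem listPow_succ' (z : List α) (n : ℕ) : listPow z (n + 1) = listPow z n ++ z := by
  simp [listPow, List.replicate_succ']

theorem prefix_listPow_append (u v : List α) (n : ℕ) : u <+: listPow (u ++ v) n ++ u := by
  cases n with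
  | zero => simp [listPow]
  | succ n => simp [listPow_succ, List.append_assoc]

theorem thetaConjugates_finite (θ : List α → List α) (w : List α) :
    (thetaConjugates θ w).Finite :=
  (Set.finite_range fun k : Fin (w.length + 1) => θ (w.drop k) ++ w.take k).subset <| by
    rintro _ ⟨u, v, rfl, rfl⟩
    exact ⟨⟨u.length, by simp⟩, by simp⟩

variable {θ : List α → List α}

namespace IsAntimorphicInvolution

theorem map_nil (hθ : IsAntimorphicInvolution θ) : θ [] = [] := by
  simpa using congrArg List.length (hθ.1 [] [])

theorem length_le_length_map (hθ : IsAntimorphicInvolution θ) (u : List α) :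
    u.length ≤ (θ u).length := by
  induction u with
  | nil => simp
  | cons a u ih =>
    have hne : θ [a] ≠ [] := fun h => by simpa [h, hθ.map_nil] using hθ.2 [a]
    rw [← List.singleton_append, hθ.1, List.length_append, List.length_append]
    have := List.length_pos_of_ne_nil hne
    simp only [List.length_singleton]
    omega

theorem length_map (hθ : IsAntimorphicInvolution θ) (u : List α) : (θ u).length = u.length :=
  le_antisymm (by simpa [hθ.2 u] using hθ.length_le_length_map (θ u)) (hθ.length_le_length_map u)

end IsAntimorphicInvolution

theorem image_thetaConjugates_subset_append (hθ : IsAntimorphicInvolution θ) (w z : List α) :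
    (θ z ++ ·) '' thetaConjugates θ w ⊆ thetaConjugates θ (w ++ z) := by
  rintro _ ⟨_, ⟨u, v, rfl, rfl⟩, rfl⟩
  exact ⟨u, v ++ z, by simp, by simp [hθ.1]⟩

theorem thetaConjugates_eq_singleton_of_forall_prefix (hθ : IsAntimorphicInvolution θ)
    {z : List α} (n : ℕ) (hpre : ∀ x ∈ thetaConjugates θ (listPow z (n + 1)), θ z <+: x) :
    thetaConjugates θ z = {θ z} := by
  refine Set.eq_singleton_iff_unique_mem.2 ⟨⟨[], z, rfl, by simp⟩, ?_⟩
  rintro _ ⟨u, v, rfl, rfl⟩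
  obtain ⟨s, hs⟩ := prefix_listPow_append u v n
  obtain ⟨x, hx⟩ := hpre (θ v ++ u ++ s)
    ⟨listPow (u ++ v) n ++ u, v, by simp [listPow_succ'], by simp [hs]⟩
  refine (List.append_inj hx.symm ?_).1
  simp [hθ.1, hθ.length_map, Nat.add_comm]

theorem stmt5_general (θ : List α → List α) (hθ : IsAntimorphicInvolution θ) (z : List α)
    (h : (thetaConjugates θ z).ncard ≠ 1) (i : ℕ) :
    (thetaConjugates θ (listPow z i)).ncard < (thetaConjugates θ (listPow z (i + 1))).ncard := by
  have hsub := image_thetaConjugates_subset_append hθ (listPow z i) z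
  have hinj : Function.Injective (θ z ++ ·) := fun _ _ => List.append_cancel_left
  rw [listPow_succ', ← Set.ncard_image_of_injective _ hinj]
  refine (Set.ncard_le_ncard hsub (thetaConjugates_finite θ _)).lt_of_ne fun hcard => h ?_
  have heq := Set.eq_of_subset_of_ncard_le hsub hcard.ge (thetaConjugates_finite θ _)
  rw [thetaConjugates_eq_singleton_of_forall_prefix hθ i ?_, Set.ncard_singleton]
  rw [listPow_succ', ← heq]
  rintro _ ⟨x, -, rfl⟩
  exact List.prefix_append _ _

theorem stmt5 (θ : List α → List α) (hθ : IsAntimorphicInvolution θ) (z : List α)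
    (h : (thetaConjugates θ z).ncard ≠ 1) (i : ℕ) (hi : 1 ≤ i) :
    (thetaConjugates θ (listPow z i)).ncard < (thetaConjugates θ (listPow z (i + 1))).ncard :=
  stmt5_general θ hθ z h i
end

section
/- Let θ be an antimorphic involution. The conjugacy class of a word contains exactly two distinct θ-palindromes if and only if it contains a word of the form (αθ(α))^l for some word α and l ≥ 1 with αθ(α) primitive; in particular such a word has even length. -/
variable {α : Type*}

/- ### listPow basics -/

theorem aux_listPow_zero (z : List α) : listPow z 0 = [] := rfl

theorem aux_listPow_succ (z : List α) (n : ℕ) : listPow z (n+1) = z ++ listPow z n := by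
  simp [listPow, List.replicate_succ]

theorem aux_listPow_one (z : List α) : listPow z 1 = z := by simp [listPow]

theorem aux_listPow_add (z : List α) (m n : ℕ) :
    listPow z (m+n) = listPow z m ++ listPow z n := by
  induction m with
  | zero => simp [aux_listPow_zero]
  | succ m ih => rw [Nat.succ_add, aux_listPow_succ, aux_listPow_succ, ih, List.append_assoc]

theorem aux_listPow_succ' (z : List α) (n : ℕ) : listPow z (n+1) = listPow z n ++ z := by
  rw [aux_listPow_add, aux_listPow_one]

theorem aux_length_listPow (z : List α) (n : ℕ) :
    (listPow z n).length = n * z.length := by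
  induction n with
  | zero => simp [aux_listPow_zero]
  | succ n ih => rw [aux_listPow_succ, List.length_append, ih]; ring

theorem aux_listPow_nil (k : ℕ) : listPow ([] : List α) k = [] := by
  have := aux_length_listPow ([] : List α) k
  simpa using List.length_eq_zero_iff.mp (by simpa using this)

theorem aux_listPow_mul (z : List α) (m n : ℕ) :
    listPow z (m*n) = listPow (listPow z m) n := by
  induction n with
  | zero => simp [aux_listPow_zero]
  | succ n ih => rw [Nat.mul_succ, aux_listPow_add, aux_listPow_succ', ih]

/- ### θ basics -/

theorem aux_th_nil {θ : List α → List α} (hθ : IsAntimorphicInvolution θ) : θ [] = [] := by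
  have h := hθ.1 ([] : List α) []
  simp only [List.append_nil] at h
  have := congrArg List.length h
  simp only [List.length_append] at this
  exact List.length_eq_zero_iff.mp (by omega)

theorem aux_th_ne_nil {θ : List α → List α} (hθ : IsAntimorphicInvolution θ)
    {u : List α} (hu : u ≠ []) : θ u ≠ [] := fun h => hu (by rw [← hθ.2 u, h, aux_th_nil hθ])

theorem aux_th_length {θ : List α → List α} (hθ : IsAntimorphicInvolution θ)
    (u : List α) : (θ u).length = u.length := by
  have key : ∀ v : List α, v.length ≤ (θ v).length := by
    intro v
    induction v with
    | nil => simp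
    | cons a t ih =>
      have h : θ (a :: t) = θ t ++ θ [a] := by
        have := hθ.1 [a] t; simpa using this
      have hpos : 0 < (θ [a]).length :=
        List.length_pos_iff.mpr (aux_th_ne_nil hθ (by simp))
      rw [h, List.length_append]
      simp only [List.length_cons]
      omega
  have h1 := key u
  have h2 := key (θ u)
  rw [hθ.2 u] at h2
  omega

theorem aux_th_listPow {θ : List α → List α} (hθ : IsAntimorphicInvolution θ)
    (z : List α) (n : ℕ) : θ (listPow z n) = listPow (θ z) n := by
  induction n with
  | zero => simpa [aux_listPow_zero] using aux_th_nil hθ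
  | succ n ih => rw [aux_listPow_succ, hθ.1, ih, aux_listPow_succ']

/- ### commuting words -/

theorem aux_comm_aux : ∀ (n : ℕ) (x y : List α), x.length + y.length ≤ n →
    x ++ y = y ++ x → ∃ (t : List α) (i j : ℕ), x = listPow t i ∧ y = listPow t j := by
  intro n
  induction n with
  | zero =>
    intro x y hl _
    have hx : x = [] := List.length_eq_zero_iff.mp (by omega)
    have hy : y = [] := List.length_eq_zero_iff.mp (by omega)
    exact ⟨[], 0, 0, by simp [hx, aux_listPow_zero], by simp [hy, aux_listPow_zero]⟩
  | succ n ih =>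
    intro x y hl h
    rcases eq_or_ne x [] with rfl | hx
    · exact ⟨y, 0, 1, rfl, (aux_listPow_one y).symm⟩
    rcases eq_or_ne y [] with rfl | hy
    · exact ⟨x, 1, 0, (aux_listPow_one x).symm, rfl⟩
    rcases List.append_eq_append_iff.mp h with ⟨z, hz1, hz2⟩ | ⟨z, hz1, hz2⟩
    · -- y = x ++ z, y = z ++ x
      have hcomm : x ++ z = z ++ x := by rw [← hz1, ← hz2]
      have hxlen : 0 < x.length := List.length_pos_iff.mpr hx
      have hlen : x.length + z.length ≤ n := by
        have := congrArg List.length hz1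
        simp only [List.length_append] at this
        omega
      obtain ⟨t, i, j, hxi, hzj⟩ := ih x z hlen hcomm
      exact ⟨t, i, i + j, hxi, by rw [hz1, hxi, hzj, aux_listPow_add]⟩
    · -- x = y ++ z, x = z ++ y
      have hcomm : y ++ z = z ++ y := by rw [← hz1, ← hz2]
      have hylen : 0 < y.length := List.length_pos_iff.mpr hy
      have hlen : y.length + z.length ≤ n := by
        have := congrArg List.length hz1
        simp only [List.length_append] at this
        omega
      obtain ⟨t, i, j, hyi, hzj⟩ := ih y z hlen hcomm
      exact ⟨t, i + j, i, by rw [hz1, hyi, hzj, aux_listPow_add], hyi⟩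

theorem aux_comm (x y : List α) (h : x ++ y = y ++ x) :
    ∃ (t : List α) (i j : ℕ), x = listPow t i ∧ y = listPow t j :=
  aux_comm_aux (x.length + y.length) x y le_rfl h

/- ### conjugacy class basics -/

theorem aux_conj_self (w : List α) : w ∈ conjClass w := ⟨w, [], by simp, by simp⟩

theorem aux_conj_symm {w x : List α} (h : x ∈ conjClass w) : w ∈ conjClass x := by
  obtain ⟨u, v, h1, h2⟩ := h
  exact ⟨v, u, h2, h1⟩

theorem aux_conj_trans {w x y : List α} (hyx : y ∈ conjClass x) (hxw : x ∈ conjClass w) :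
    y ∈ conjClass w := by
  obtain ⟨u, v, hw, hx⟩ := hxw
  obtain ⟨s, t, hx', hy⟩ := hyx
  rw [hx] at hx'
  rcases List.append_eq_append_iff.mp hx' with ⟨z, hz1, hz2⟩ | ⟨z, hz1, hz2⟩
  · -- s = v ++ z, u = z ++ t
    refine ⟨z, t ++ v, ?_, ?_⟩
    · rw [hw, hz2]; simp
    · rw [hy, hz1]; simp
  · -- v = s ++ z, t = z ++ u
    refine ⟨u ++ s, z, ?_, ?_⟩
    · rw [hw, hz1]; simp
    · rw [hy, hz2]; simp

theorem aux_conj_eq {w x : List α} (h : x ∈ conjClass w) : conjClass x = conjClass w := by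
  ext y
  exact ⟨fun hy => aux_conj_trans hy h, fun hy => aux_conj_trans hy (aux_conj_symm h)⟩

/- ### powers and conjugacy -/

theorem aux_pow_shift (u v : List α) (l : ℕ) :
    listPow (u ++ v) l ++ u = u ++ listPow (v ++ u) l := by
  induction l with
  | zero => simp [aux_listPow_zero]
  | succ l ih =>
    rw [aux_listPow_succ, aux_listPow_succ]
    simp only [List.append_assoc] at ih ⊢
    rw [ih]

theorem aux_pow_conj_mem {p q : List α} (hq : q ∈ conjClass p) (l : ℕ) :
    listPow q l ∈ conjClass (listPow p l) := by
  obtain ⟨u, v, hp, hqe⟩ := hq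
  cases l with
  | zero => simp only [aux_listPow_zero]; exact aux_conj_self []
  | succ l =>
    refine ⟨u, v ++ listPow (u ++ v) l, ?_, ?_⟩
    · rw [hp, aux_listPow_succ]; simp
    · rw [hqe, aux_listPow_succ]
      have := aux_pow_shift u v l
      simp only [List.append_assoc] at this ⊢
      rw [← this]

theorem aux_pow_split_aux (p : List α) (hp : p ≠ []) (l : ℕ) :
    ∀ (n : ℕ) (U V : List α), U.length ≤ n → listPow p l = U ++ V →
      ∃ u v, p = u ++ v ∧ V ++ U = listPow (v ++ u) l := by
  intro n
  induction n with
  | zero =>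
    intro U V hl heq
    have hU : U = [] := List.length_eq_zero_iff.mp (by omega)
    subst hU
    exact ⟨[], p, by simp, by simpa using heq.symm⟩
  | succ n ih =>
    intro U V hl heq
    have hplen : 0 < p.length := List.length_pos_iff.mpr hp
    by_cases hcase : p.length ≤ U.length
    · -- U starts with a full copy of p
      cases l with
      | zero =>
        exfalso
        rw [aux_listPow_zero] at heq
        have := congrArg List.length heq
        simp only [List.length_nil, List.length_append] at this
        omega
      | succ l =>
        rw [aux_listPow_succ] at heq
        rcases List.append_eq_append_iff.mp heq.symm with ⟨z, hz1, hz2⟩ | ⟨z, hz1, hz2⟩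
        · -- p = U ++ z ∧ V = z ++ listPow p l, with |U| ≥ |p| forces z = []
          have hlz := congrArg List.length hz1
          simp only [List.length_append] at hlz
          have hz : z = [] := List.length_eq_zero_iff.mp (by omega)
          subst hz
          simp only [List.append_nil] at hz1
          simp only [List.nil_append] at hz2
          refine ⟨[], p, by simp, ?_⟩
          rw [hz2, ← hz1, List.append_nil]
          exact (aux_listPow_succ' p l).symm
        · -- U = p ++ z, V : listPow p l = z ++ V
          have heq2 : listPow p (l+1) = z ++ (V ++ p) := by
            rw [aux_listPow_succ', hz2]; simp
          have hlen : z.length ≤ n := by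
            have := congrArg List.length hz1
            simp only [List.length_append] at this
            omega
          obtain ⟨u, v, hpe, hres⟩ := ih z (V ++ p) hlen heq2
          refine ⟨u, v, hpe, ?_⟩
          rw [hz1, ← List.append_assoc, ← hres]
    · -- U is a prefix of p
      push_neg at hcase
      cases l with
      | zero =>
        rw [aux_listPow_zero] at heq
        have hU : U = [] := (List.append_eq_nil_iff.mp heq.symm).1
        have hV : V = [] := (List.append_eq_nil_iff.mp heq.symm).2
        subst hU; subst hV
        exact ⟨[], p, by simp, by simp [aux_listPow_zero]⟩
      | succ l =>
        rw [aux_listPow_succ] at heq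
        rcases List.append_eq_append_iff.mp heq.symm with ⟨z, hz1, hz2⟩ | ⟨z, hz1, hz2⟩
        · -- p = U ++ z, V = z ++ listPow p l
          refine ⟨U, z, hz1, ?_⟩
          rw [hz2]
          have hps := aux_pow_shift U z l
          rw [← hz1] at hps
          -- listPow p l ++ U = U ++ listPow (z ++ U) l
          rw [aux_listPow_succ]
          calc (z ++ listPow p l) ++ U = z ++ (listPow p l ++ U) := by simp
            _ = z ++ (U ++ listPow (z ++ U) l) := by rw [hps]
            _ = (z ++ U) ++ listPow (z ++ U) l := by simp
        · -- U = p ++ z : impossible since |U| < |p|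
          exfalso
          have := congrArg List.length hz1
          simp only [List.length_append] at this
          omega

theorem aux_pow_split {p : List α} (hp : p ≠ []) {l : ℕ} {U V : List α}
    (heq : listPow p l = U ++ V) :
    ∃ u v, p = u ++ v ∧ V ++ U = listPow (v ++ u) l :=
  aux_pow_split_aux p hp l U.length U V le_rfl heq

/- ### primitivity -/

theorem aux_prim_conj {w x : List α} (hw : Primitive w) (hx : x ∈ conjClass w) :
    Primitive x := by
  obtain ⟨u, v, hwe, hxe⟩ := hx
  constructor
  · intro hxnil
    rw [hxe] at hxnil
    obtain ⟨hv, hu⟩ := List.append_eq_nil_iff.mp hxnil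
    exact hw.1 (by rw [hwe, hu, hv]; rfl)
  · intro t k hxt
    have ht : t ≠ [] := by
      intro htn
      rw [htn, aux_listPow_nil] at hxt
      rw [hxe] at hxt
      obtain ⟨hv, hu⟩ := List.append_eq_nil_iff.mp hxt
      exact hw.1 (by rw [hwe, hu, hv]; rfl)
    have hsplit : listPow t k = v ++ u := by rw [← hxt, hxe]
    obtain ⟨u', v', _, hres⟩ := aux_pow_split ht hsplit
    exact hw.2 (v' ++ u') k (by rw [hwe, ← hres])

theorem aux_prim_root_aux : ∀ (n : ℕ) (w : List α), w.length ≤ n → w ≠ [] →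
    ∃ (r : List α) (l : ℕ), Primitive r ∧ 1 ≤ l ∧ w = listPow r l := by
  intro n
  induction n with
  | zero =>
    intro w hl hne
    exact absurd (List.length_eq_zero_iff.mp (by omega)) hne
  | succ n ih =>
    intro w hl hne
    by_cases hp : Primitive w
    · exact ⟨w, 1, hp, le_refl 1, (aux_listPow_one w).symm⟩
    · rw [Primitive] at hp
      push_neg at hp
      obtain ⟨t, k, heq, hk⟩ := hp hne
      have ht : t ≠ [] := by
        intro htn
        rw [htn, aux_listPow_nil] at heq
        exact hne heq
      have hk2 : 2 ≤ k := by
        rcases k with _ | _ | k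
        · exact absurd (by rw [heq, aux_listPow_zero]) hne
        · exact absurd rfl hk
        · omega
      have htlen : 0 < t.length := List.length_pos_iff.mpr ht
      have hwlen : w.length = k * t.length := by rw [heq, aux_length_listPow]
      have hlt : t.length ≤ n := by nlinarith
      obtain ⟨r, j, hrprim, hj, hte⟩ := ih t hlt ht
      refine ⟨r, j * k, hrprim, by nlinarith, ?_⟩
      rw [heq, hte, ← aux_listPow_mul]

theorem aux_prim_root {w : List α} (hne : w ≠ []) :
    ∃ (r : List α) (l : ℕ), Primitive r ∧ 1 ≤ l ∧ w = listPow r l :=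
  aux_prim_root_aux w.length w le_rfl hne

/- ### power injectivity and palindromes of powers -/

theorem aux_pow_inj {q q' : List α} {l : ℕ} (hl : 1 ≤ l)
    (hlen : q.length = q'.length) (h : listPow q l = listPow q' l) : q = q' := by
  obtain ⟨l, rfl⟩ := Nat.exists_eq_add_of_le hl
  rw [Nat.add_comm, aux_listPow_succ, aux_listPow_succ] at h
  exact (List.append_inj h hlen).1

theorem aux_th_pow_iff {θ : List α → List α} (hθ : IsAntimorphicInvolution θ)
    {q : List α} {l : ℕ} (hl : 1 ≤ l) (h : θ (listPow q l) = listPow q l) : θ q = q := by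
  rw [aux_th_listPow hθ] at h
  exact aux_pow_inj hl (aux_th_length hθ q) h

/- ### the key rigidity lemma -/

theorem aux_lemA' {θ : List α → List α} (hθ : IsAntimorphicInvolution θ)
    {x y : List α} (hx : x ≠ []) (hlt : x.length < y.length)
    (h1 : θ (x ++ y) = x ++ y) (h2 : θ (y ++ x) = y ++ x)
    (hp : Primitive (x ++ y)) : False := by
  rw [hθ.1] at h1 h2
  -- h1 : θ y ++ θ x = x ++ y, h2 : θ x ++ θ y = y ++ x
  rcases List.append_eq_append_iff.mp h1 with ⟨z, hz1, hz2⟩ | ⟨z, hz1, hz2⟩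
  · -- x = θ y ++ z : length contradiction
    have := congrArg List.length hz1
    simp only [List.length_append, aux_th_length hθ] at this
    omega
  · -- θ y = x ++ z, y = z ++ θ x
    have hzne : z ≠ [] := by
      intro hzn
      have := congrArg List.length hz2
      simp only [hzn, List.nil_append, aux_th_length hθ] at this
      omega
    have hcomm : (θ x ++ x) ++ z = z ++ (θ x ++ x) := by
      have h2' : θ x ++ (x ++ z) = (z ++ θ x) ++ x := by rw [← hz1, ← hz2]; exact h2
      simp only [List.append_assoc] at h2' ⊢
      exact h2'
    obtain ⟨t, i, j, hti, htj⟩ := aux_comm _ _ hcomm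
    have hyx : y ++ x = listPow t (j + i) := by
      rw [hz2, aux_listPow_add, ← htj, ← hti]
      simp
    have hprimyx : Primitive (y ++ x) := aux_prim_conj hp ⟨x, y, rfl, rfl⟩
    have hone := hprimyx.2 t (j + i) hyx
    have hine : i ≠ 0 := by
      intro hi0
      rw [hi0, aux_listPow_zero] at hti
      exact (aux_th_ne_nil hθ hx) (List.append_eq_nil_iff.mp hti).1
    have hjne : j ≠ 0 := by
      intro hj0
      rw [hj0, aux_listPow_zero] at htj
      exact hzne htj
    omega

theorem aux_lemA {θ : List α → List α} (hθ : IsAntimorphicInvolution θ)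
    {x y : List α} (h1 : θ (x ++ y) = x ++ y) (h2 : θ (y ++ x) = y ++ x)
    (hp : Primitive (x ++ y)) : x = [] ∨ y = [] ∨ x.length = y.length := by
  rcases eq_or_ne x [] with rfl | hx
  · exact Or.inl rfl
  rcases eq_or_ne y [] with rfl | hy
  · exact Or.inr (Or.inl rfl)
  rcases lt_trichotomy x.length y.length with h | h | h
  · exact absurd (aux_lemA' hθ hx h h1 h2 hp) not_false
  · exact Or.inr (Or.inr h)
  · have hp' : Primitive (y ++ x) := aux_prim_conj hp ⟨x, y, rfl, rfl⟩
    exact absurd (aux_lemA' hθ hy h h2 h1 hp') not_false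

theorem stmt12 (θ : List α → List α) (hθ : IsAntimorphicInvolution θ) (w : List α) :
    {p | p ∈ conjClass w ∧ θ p = p}.ncard = 2 ↔
      ∃ (a : List α) (l : ℕ), 1 ≤ l ∧ Primitive (a ++ θ a) ∧
        listPow (a ++ θ a) l ∈ conjClass w := by
  constructor
  · intro h
    rw [Set.ncard_eq_two] at h
    obtain ⟨A, B, hAB, hS⟩ := h
    have hA : A ∈ conjClass w ∧ θ A = A := by
      have hx : A ∈ {p | p ∈ conjClass w ∧ θ p = p} := by rw [hS]; exact Set.mem_insert _ _
      exact hx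
    have hB : B ∈ conjClass w ∧ θ B = B := by
      have hx : B ∈ {p | p ∈ conjClass w ∧ θ p = p} := by
        rw [hS]; exact Set.mem_insert_of_mem _ rfl
      exact hx
    have hwne : w ≠ [] := by
      intro hwnil
      subst hwnil
      obtain ⟨u, v, h1, h2⟩ := hA.1
      obtain ⟨u', v', h1', h2'⟩ := hB.1
      obtain ⟨hu, hv⟩ := List.append_eq_nil_iff.mp h1.symm
      obtain ⟨hu', hv'⟩ := List.append_eq_nil_iff.mp h1'.symm
      exact hAB (by rw [h2, h2', hu, hv, hu', hv'])
    obtain ⟨r, l, hrprim, hl, hw⟩ := aux_prim_root hwne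
    obtain ⟨U, V, h1, h2⟩ := hA.1
    rw [hw] at h1
    obtain ⟨u1, v1, hr1, hres1⟩ := aux_pow_split hrprim.1 h1
    have hAq : A = listPow (v1 ++ u1) l := by rw [h2, hres1]
    obtain ⟨U', V', h1', h2'⟩ := hB.1
    rw [hw] at h1'
    obtain ⟨u2, v2, hr2, hres2⟩ := aux_pow_split hrprim.1 h1'
    have hBq : B = listPow (v2 ++ u2) l := by rw [h2', hres2]
    have hq1c : (v1 ++ u1) ∈ conjClass r := ⟨u1, v1, hr1, rfl⟩
    have hq2c : (v2 ++ u2) ∈ conjClass r := ⟨u2, v2, hr2, rfl⟩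
    have hq1pal : θ (v1 ++ u1) = v1 ++ u1 :=
      aux_th_pow_iff hθ hl (by rw [← hAq]; exact hA.2)
    have hq2pal : θ (v2 ++ u2) = v2 ++ u2 :=
      aux_th_pow_iff hθ hl (by rw [← hBq]; exact hB.2)
    have hq12 : (v1 ++ u1) ≠ (v2 ++ u2) := by
      intro he
      exact hAB (by rw [hAq, hBq, he])
    have hq2q1 : (v2 ++ u2) ∈ conjClass (v1 ++ u1) :=
      aux_conj_trans hq2c (aux_conj_symm hq1c)
    obtain ⟨s, t, hq1e, hq2e⟩ := hq2q1
    have hq1prim : Primitive (v1 ++ u1) := aux_prim_conj hrprim hq1c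
    rw [hq1e] at hq1pal hq1prim
    rw [hq2e] at hq2pal
    rcases aux_lemA hθ hq1pal hq2pal hq1prim with hs | ht | hlen
    · exact absurd (by rw [hq1e, hq2e, hs]; simp) hq12
    · exact absurd (by rw [hq1e, hq2e, ht]; simp) hq12
    · rw [hθ.1] at hq1pal
      have hts : θ t = s :=
        (List.append_inj hq1pal (by rw [aux_th_length hθ]; omega)).1
      have hst : θ s = t := by rw [← hts, hθ.2]
      refine ⟨s, l, hl, ?_, ?_⟩
      · rw [hst]; exact hq1prim
      · rw [hst, ← hq1e, ← hAq]; exact hA.1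
  · rintro ⟨a, l, hl, hprim, hmem⟩
    have hane : a ≠ [] := by
      intro ha
      exact hprim.1 (by rw [ha, aux_th_nil hθ]; rfl)
    have hthane : θ a ≠ [] := aux_th_ne_nil hθ hane
    have hpne : (a ++ θ a) ≠ [] := hprim.1
    have hppal : θ (a ++ θ a) = a ++ θ a := by rw [hθ.1, hθ.2]
    have hqpal : θ (θ a ++ a) = θ a ++ a := by rw [hθ.1, hθ.2]
    have hqc : (θ a ++ a) ∈ conjClass (a ++ θ a) := ⟨a, θ a, rfl, rfl⟩
    have hconjeq : conjClass (listPow (a ++ θ a) l) = conjClass w := aux_conj_eq hmem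
    have hABne : listPow (a ++ θ a) l ≠ listPow (θ a ++ a) l := by
      intro he
      have hlen : (a ++ θ a).length = (θ a ++ a).length := by
        simp [List.length_append, Nat.add_comm]
      have hpq := aux_pow_inj hl hlen he
      obtain ⟨t, i, j, hti, htj⟩ := aux_comm a (θ a) hpq
      have hone := hprim.2 t (i + j) (by rw [aux_listPow_add, ← hti, ← htj])
      have hine : i ≠ 0 := fun h0 => hane (by rwa [h0, aux_listPow_zero] at hti)
      have hjne : j ≠ 0 := fun h0 => hthane (by rwa [h0, aux_listPow_zero] at htj)
      omega
    have hSeq : {x | x ∈ conjClass w ∧ θ x = x}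
        = {listPow (a ++ θ a) l, listPow (θ a ++ a) l} := by
      ext x
      simp only [Set.mem_setOf_eq, Set.mem_insert_iff, Set.mem_singleton_iff]
      constructor
      · rintro ⟨hxc, hxpal⟩
        rw [← hconjeq] at hxc
        obtain ⟨U, V, h1, h2⟩ := hxc
        obtain ⟨u, v, hpe, hres⟩ := aux_pow_split hpne h1
        have hxq : x = listPow (v ++ u) l := by rw [h2, hres]
        have hvu_pal : θ (v ++ u) = v ++ u :=
          aux_th_pow_iff hθ hl (by rw [← hxq]; exact hxpal)
        have huv_pal : θ (u ++ v) = u ++ v := by rw [← hpe]; exact hppal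
        have huv_prim : Primitive (u ++ v) := by rw [← hpe]; exact hprim
        rcases aux_lemA hθ huv_pal hvu_pal huv_prim with hu | hv | hlen
        · left
          rw [hxq]
          congr 1
          rw [hu, List.append_nil]
          rw [hu, List.nil_append] at hpe
          exact hpe.symm
        · left
          rw [hxq]
          congr 1
          rw [hv, List.nil_append]
          rw [hv, List.append_nil] at hpe
          exact hpe.symm
        · right
          have hlena : a.length = u.length := by
            have h3 := congrArg List.length hpe
            simp only [List.length_append, aux_th_length hθ] at h3
            omega
          obtain ⟨hau, htav⟩ := List.append_inj hpe hlena
          rw [hxq, ← htav, ← hau]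
      · rintro (rfl | rfl)
        · exact ⟨hmem, by rw [aux_th_listPow hθ, hppal]⟩
        · refine ⟨?_, by rw [aux_th_listPow hθ, hqpal]⟩
          rw [← hconjeq]
          exact aux_pow_conj_mem hqc l
    rw [hSeq]
    exact Set.ncard_pair hABne
end

section
/- Let θ be an antimorphic involution and w a palindrome. Then C_θ(w) contains at most two palindromes, and it contains exactly two palindromes (namely w and θ(w)) when w ≠ θ(w). -/
variable {α : Type*}

/-- An antimorphic involution is induced by a letter involution `f`:
`θ u = map f u.reverse`. -/
theorem antimorph_rep (θ : List α → List α) (hθ : IsAntimorphicInvolution θ) :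
    ∃ f : α → α, (∀ a, f (f a) = a) ∧ ∀ u, θ u = List.map f u.reverse := by
  obtain ⟨ham, hinv⟩ := hθ
  have hnil : θ [] = [] := by
    have h := ham [] []
    simp only [List.append_nil] at h
    have hlen := congrArg List.length h
    simp only [List.length_append] at hlen
    have : (θ []).length = 0 := by omega
    exact List.eq_nil_of_length_eq_zero this
  have hne : ∀ u : List α, u ≠ [] → θ u ≠ [] := by
    intro u hu h
    exact hu (by rw [← hinv u, h, hnil])
  have hcons : ∀ (a : α) (u : List α), θ (a :: u) = θ u ++ θ [a] := by
    intro a u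
    have := ham [a] u
    simpa using this
  have hsing : ∀ a : α, ∃ b : α, θ [a] = [b] := by
    intro a
    rcases h : θ [a] with _ | ⟨b, l⟩
    · exact absurd h (hne [a] (by simp))
    · rcases l with _ | ⟨c, l'⟩
      · exact ⟨b, rfl⟩
      · exfalso
        have h2 : θ (θ [a]) = [a] := hinv [a]
        rw [h, hcons b (c :: l')] at h2
        have hlen := congrArg List.length h2
        simp only [List.length_append, List.length_singleton] at hlen
        have h3 := hne (c :: l') (by simp)
        have h4 := hne [b] (by simp)
        have : 1 ≤ (θ (c :: l')).length := List.length_pos_iff.mpr h3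
        have : 1 ≤ (θ [b]).length := List.length_pos_iff.mpr h4
        omega
  choose f hf using hsing
  have hrep : ∀ u, θ u = List.map f u.reverse := by
    intro u
    induction u with
    | nil => simpa using hnil
    | cons a u ih =>
      rw [hcons a u, ih, hf a, List.reverse_cons, List.map_append]
      simp
  refine ⟨f, ?_, hrep⟩
  intro a
  have h1 : θ [f a] = [f (f a)] := hf (f a)
  have h2 : θ (θ [a]) = [a] := hinv [a]
  rw [hf a] at h2
  rw [h1] at h2
  exact List.singleton_injective h2

/-- Key combinatorial lemma (mutual K/L statements, induction on `|z|`). -/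
theorem key_lemma (f : α → α) (hf : ∀ a, f (f a) = a) :
    ∀ N : ℕ, ∀ v z : List α, v ≠ [] → z.length ≤ N →
      ((z ++ (List.map f v ++ v) = (v.reverse ++ (List.map f v).reverse) ++ z →
          List.map f z ++ v = (List.map f v).reverse ++ z) ∧
       (z ++ (List.map f v ++ v) = ((List.map f v).reverse ++ v.reverse) ++ z →
          List.map f z ++ v = v.reverse ++ z)) := by
  have hff : ∀ l : List α, List.map f (List.map f l) = l := by
    intro l; rw [List.map_map]
    have : f ∘ f = id := funext hf
    rw [this, List.map_id]
  intro N
  induction N with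
  | zero =>
    intro v z hv hz
    have hz0 : z = [] := List.eq_nil_of_length_eq_zero (Nat.le_zero.mp hz)
    subst hz0
    constructor
    · intro h
      simp only [List.nil_append, List.append_nil] at h
      have h2 := (List.append_inj h (by simp)).2
      simpa using h2
    · intro h
      simp only [List.nil_append, List.append_nil] at h
      have h2 := (List.append_inj h (by simp)).2
      simpa using h2
  | succ N ih =>
    intro v z hv hz
    have hvlen : 1 ≤ v.length := List.length_pos_iff.mpr hv
    by_cases hle : z.length ≤ v.length
    -- base cases
    · constructor
      · -- K base: |z| ≤ n
        intro h
        obtain ⟨r, hV, h2⟩ : ∃ r, v.reverse = z ++ r ∧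
            List.map f v ++ v = r ++ ((List.map f v).reverse ++ z) := by
          rw [List.append_assoc] at h
          rcases List.append_eq_append_iff.mp h with ⟨r, hV, h2⟩ | ⟨t, hzz, h2⟩
          · exact ⟨r, hV, h2⟩
          · have hlen := congrArg List.length hzz
            simp only [List.length_append, List.length_reverse] at hlen
            have ht : t = [] := List.eq_nil_of_length_eq_zero (by omega)
            subst ht
            rw [List.append_nil] at hzz
            exact ⟨[], by simp [hzz], by simpa using h2.symm⟩
        have hvrw : v = r.reverse ++ z.reverse := by
          have := congrArg List.reverse hV
          simpa using this
        rw [hvrw] at h2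
        simp only [List.map_append, List.map_reverse, List.reverse_append,
          List.reverse_reverse, List.append_assoc] at h2
        obtain ⟨E1, h3⟩ := List.append_inj h2 (by simp)
        obtain ⟨E2, h4⟩ := List.append_inj h3 (by simp)
        obtain ⟨E3, E4⟩ := List.append_inj h4 (by simp)
        -- E3 : r.reverse = map f r ; E4 : z.reverse = z
        rw [hvrw]
        simp only [List.map_append, List.map_reverse, List.reverse_append,
          List.reverse_reverse, List.append_assoc]
        rw [E3, E4]
      · -- L base: |z| ≤ n
        intro h
        obtain ⟨r, hV, h2⟩ : ∃ r, (List.map f v).reverse = z ++ r ∧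
            List.map f v ++ v = r ++ (v.reverse ++ z) := by
          rw [List.append_assoc] at h
          rcases List.append_eq_append_iff.mp h with ⟨r, hV, h2⟩ | ⟨t, hzz, h2⟩
          · exact ⟨r, hV, h2⟩
          · have hlen := congrArg List.length hzz
            simp only [List.length_append, List.length_reverse, List.length_map] at hlen
            have ht : t = [] := List.eq_nil_of_length_eq_zero (by omega)
            subst ht
            rw [List.append_nil] at hzz
            exact ⟨[], by simp [hzz], by simpa using h2.symm⟩
        have h5 : v.reverse = List.map f z ++ List.map f r := by
          have h6 := congrArg (List.map f) hV
          rw [← List.map_reverse, hff, List.map_append] at h6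
          exact h6
        have hvrw : v = (List.map f r).reverse ++ (List.map f z).reverse := by
          have := congrArg List.reverse h5
          simpa using this
        rw [h5] at h2
        rw [hvrw] at h2
        simp only [List.map_append, List.map_reverse, List.reverse_append,
          List.reverse_reverse, hff, List.append_assoc] at h2
        obtain ⟨E1, h3⟩ := List.append_inj h2 (by simp)
        obtain ⟨E2, h4⟩ := List.append_inj h3 (by simp)
        obtain ⟨E3, E4⟩ := List.append_inj h4 (by simp)
        -- E3 : (map f r).reverse = map f r ; E4 : (map f z).reverse = z
        rw [h5, hvrw]
        rw [E3, E4, List.append_assoc]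
    -- step cases: |z| > n
    · push_neg at hle
      constructor
      · -- K step: z = v.reverse ++ z₁, reduces to L(z₁)
        intro h
        obtain ⟨z₁, hzz, h2⟩ : ∃ z₁, z = v.reverse ++ z₁ ∧
            (List.map f v).reverse ++ z = z₁ ++ (List.map f v ++ v) := by
          rw [List.append_assoc] at h
          rcases List.append_eq_append_iff.mp h with ⟨t, hV, _⟩ | ⟨z₁, hzz, h2⟩
          · exfalso
            have := congrArg List.length hV
            simp only [List.length_append, List.length_reverse] at this
            omega
          · exact ⟨z₁, hzz, h2⟩
        have h2' : z₁ ++ (List.map f v ++ v) = ((List.map f v).reverse ++ v.reverse) ++ z₁ := by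
          rw [hzz] at h2
          rw [← h2, List.append_assoc]
        have hlen : z₁.length ≤ N := by
          have := congrArg List.length hzz
          simp only [List.length_append, List.length_reverse] at this
          omega
        have IH := (ih v z₁ hv hlen).2 h2'
        rw [hzz]
        simp only [List.map_append, List.map_reverse, List.append_assoc]
        rw [IH]
      · -- L step: z = (map f v).reverse ++ c, reduces to K(c)
        intro h
        obtain ⟨c, hzz, h2⟩ : ∃ c, z = (List.map f v).reverse ++ c ∧
            v.reverse ++ z = c ++ (List.map f v ++ v) := by
          rw [List.append_assoc] at h
          rcases List.append_eq_append_iff.mp h with ⟨t, hV, _⟩ | ⟨c, hzz, h2⟩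
          · exfalso
            have := congrArg List.length hV
            simp only [List.length_append, List.length_reverse, List.length_map] at this
            omega
          · exact ⟨c, hzz, h2⟩
        have h2' : c ++ (List.map f v ++ v) = (v.reverse ++ (List.map f v).reverse) ++ c := by
          rw [hzz] at h2
          rw [← h2, List.append_assoc]
        have hlen : c.length ≤ N := by
          have := congrArg List.length hzz
          simp only [List.length_append, List.length_reverse, List.length_map] at this
          omega
        have IH := (ih v c hv hlen).1 h2'
        rw [hzz]
        simp only [List.map_append, List.map_reverse, hff, List.reverse_reverse,
          List.append_assoc]
        rw [IH]

theorem stmt14 (θ : List α → List α) (hθ : IsAntimorphicInvolution θ)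
    (w : List α) (hw : w.reverse = w) :
    {p | p ∈ thetaConjugates θ w ∧ p.reverse = p}.ncard ≤ 2 ∧
      (w ≠ θ w → {p | p ∈ thetaConjugates θ w ∧ p.reverse = p} = {w, θ w}) := by
  obtain ⟨f, hf, hrep⟩ := antimorph_rep θ hθ
  have hff : ∀ l : List α, List.map f (List.map f l) = l := by
    intro l; rw [List.map_map]
    have : f ∘ f = id := funext hf
    rw [this, List.map_id]
  have hθw : θ w = List.map f w := by rw [hrep, hw]
  have hSet : {p | p ∈ thetaConjugates θ w ∧ p.reverse = p} = {w, θ w} := by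
    ext x
    simp only [thetaConjugates, Set.mem_setOf_eq, Set.mem_insert_iff, Set.mem_singleton_iff]
    constructor
    · rintro ⟨⟨u, v, huv, hx⟩, hpal⟩
      by_cases hv : v = []
      · left
        subst hv
        rw [List.append_nil] at huv
        rw [hx, hrep, huv]
        simp
      · right
        have H1 : v.reverse ++ u.reverse = u ++ v := by
          have h := hw
          rw [huv] at h
          simpa using h
        have hxval : x = List.map f v.reverse ++ u := by rw [hx, hrep]
        have H2 : u.reverse ++ List.map f v = List.map f v.reverse ++ u := by
          have h := hpal
          rw [hxval] at h
          simpa [List.map_reverse] using h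
        have Lhyp : u.reverse ++ (List.map f v ++ v) =
            ((List.map f v).reverse ++ v.reverse) ++ u.reverse := by
          calc u.reverse ++ (List.map f v ++ v)
              = (u.reverse ++ List.map f v) ++ v := by rw [List.append_assoc]
            _ = (List.map f v.reverse ++ u) ++ v := by rw [H2]
            _ = List.map f v.reverse ++ (u ++ v) := by rw [List.append_assoc]
            _ = List.map f v.reverse ++ (v.reverse ++ u.reverse) := by rw [← H1]
            _ = ((List.map f v).reverse ++ v.reverse) ++ u.reverse := by
                rw [List.map_reverse, List.append_assoc]
        have key := (key_lemma f hf u.reverse.length v u.reverse hv le_rfl).2 Lhyp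
        have hu : List.map f u.reverse = u := by
          rw [H1] at key
          exact List.append_cancel_right key
        have hurev : u.reverse = List.map f u := by
          have h := congrArg (List.map f) hu
          rw [hff] at h
          exact h
        rw [hxval, hθw, ← H2, hurev, huv, List.map_append]
    · rintro (h | h)
      · refine ⟨⟨w, [], by simp, ?_⟩, by rw [h]; exact hw⟩
        rw [h, hrep]
        simp
      · refine ⟨⟨[], w, by simp, by simpa using h⟩, ?_⟩
        rw [h, hθw, ← List.map_reverse, hw]
  refine ⟨?_, fun _ => hSet⟩
  rw [hSet]
  have h1 : ({w, θ w} : Set (List α)).ncard ≤ ({θ w} : Set (List α)).ncard + 1 :=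
    Set.ncard_insert_le w {θ w}
  simpa using h1
end

section
/- Let θ be an antimorphic involution and w ∈ Σ*. The set C_θ(w) contains at least one θ-palindrome if and only if w = uxu or w = xuu for some words u, x with x a θ-palindrome. -/
variable {α : Type*}

theorem stmt15 (θ : List α → List α) (hθ : IsAntimorphicInvolution θ) (w : List α) :
    (∃ p ∈ thetaConjugates θ w, θ p = p) ↔
      ∃ u x : List α, θ x = x ∧ (w = u ++ x ++ u ∨ w = x ++ u ++ u) := by
  obtain ⟨hanti, hinv⟩ := hθ
  constructor
  · rintro ⟨p, ⟨u, v, hw, hp⟩, hpal⟩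
    subst hp
    rw [hanti, hinv] at hpal
    rcases List.append_eq_append_iff.mp hpal with ⟨a, ha1, ha2⟩ | ⟨c, hc1, hc2⟩
    · refine ⟨u, a, ?_, Or.inl ?_⟩
      · have : θ u ++ a = θ u ++ θ a := by rw [← ha1, ha2, hanti]
        exact (List.append_cancel_left this).symm
      · rw [hw, ha2, List.append_assoc]
    · refine ⟨v, c, ?_, Or.inr ?_⟩
      · have : θ v ++ c = θ v ++ θ c := by rw [← hc1, hc2, hanti]
        exact (List.append_cancel_left this).symm
      · rw [hw, hc2, List.append_assoc]
  · rintro ⟨u, x, hx, hw | hw⟩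
    · refine ⟨θ (x ++ u) ++ u, ⟨u, x ++ u, by rw [hw, List.append_assoc], rfl⟩, ?_⟩
      rw [hanti, hinv, hanti, hx]
      simp
    · refine ⟨θ u ++ (x ++ u), ⟨x ++ u, u, by rw [hw], rfl⟩, ?_⟩
      rw [hanti, hinv, hanti, hx]
      simp
end

section
/- Let θ be an antimorphic involution and w a θ-palindrome. Then C_θ(w) contains exactly one θ-palindrome, namely w itself; i.e., if w = uv and θ(v)u is a θ-palindrome, then θ(v)u = w. -/
variable {α : Type*}

private lemma aux16 : ∀ n (a u b : List α), a.length = n → u.length = n →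
    a = (b ++ u).take n → u = (b ++ a).take n → a = u := by
  intro n
  induction n using Nat.strong_induction_on with
  | _ n ih =>
    intro a u b ha hu h1 h2
    rcases le_or_gt n b.length with hb | hb
    · rw [List.take_append, Nat.sub_eq_zero_of_le hb,
        List.take_zero, List.append_nil] at h1 h2
      rw [h1, h2]
    · rcases eq_or_ne b [] with rfl | hbne
      · simp only [List.nil_append] at h1 h2
        rw [h1, ← hu, List.take_length]
      · have hm : n - b.length < n := by
          have : 0 < b.length := List.length_pos_iff.mpr hbne
          omega
        rw [List.take_append,
          List.take_of_length_le (le_of_lt hb)] at h1 h2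
        have hml : n - b.length ≤ n := Nat.sub_le _ _
        have key : u.take (n - b.length) = a.take (n - b.length) := by
          apply ih (n - b.length) hm _ _ b
          · rw [List.length_take, hu]; omega
          · rw [List.length_take, ha]; omega
          · conv_lhs => rw [h2]
          · conv_lhs => rw [h1]
        rw [h1, key, ← h2]

theorem stmt16 (θ : List α → List α) (hθ : IsAntimorphicInvolution θ)
    (w : List α) (hw : θ w = w) :
    ∀ u v : List α, w = u ++ v → θ (θ v ++ u) = θ v ++ u → θ v ++ u = w := by
  obtain ⟨hanti, hinv⟩ := hθ
  intro u v hwuv hpal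
  subst hwuv
  have h1 : θ v ++ θ u = u ++ v := by rw [← hanti]; exact hw
  have h2 : θ u ++ v = θ v ++ u := by
    rw [← hpal, hanti, hinv]
  have hlen1 : (θ v).length + (θ u).length = u.length + v.length := by
    have := congrArg List.length h1
    simpa using this
  have hlen2 : (θ u).length + v.length = (θ v).length + u.length := by
    have := congrArg List.length h2
    simpa using this
  have hlu : (θ u).length = u.length := by omega
  have hau : θ u = u := by
    apply aux16 u.length (θ u) u (θ v) hlu rfl
    · rw [← h2, List.take_append]
      simp [hlu]
    · rw [h1, List.take_append]
      simp
  rw [← h1, hau]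
end
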